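/- arXiv:2411.09519 — 5 statements merged into one kernel-verified Lean document; each statement's English description precedes it below -/
import Mathlib

section
/- Let 0 < p* < 1, let π : ℝ → ℝ be continuously differentiable on [0,1] with π monotonically decreasing on [0,1], π(0) = 1, 0 ≤ π(p) ≤ 1 for all p ∈ [0,1], and π(p) = 0 for all p ∈ [p*,1]. Let r ∈ (0,1) and ε ∈ [0,1], and define f(P) = -r - ε·(deriv π P)·(1-P) + π(P). Then there exists P ∈ [0,1] with f(P) = 0, i.e., the adaptive dynamics Ṗ = f(P) has at least one equilibrium point. -/
open Set Filter Topology

/-!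
Since `π` is antitone, `π' ≤ 0` inside `(0,1)`, so `f(P) ≥ π(P) - r`, which is positive for small
`P > 0` because `π(0) = 1 > r`. Beyond `p*` the function `π` vanishes identically, so `f = -r < 0`
there. The field `f` is continuous on `(0,1)` because `π` is `C¹`, and the intermediate value
theorem gives a zero in between.
-/

noncomputable def adaptiveField (r ε : ℝ) (π : ℝ → ℝ) (P : ℝ) : ℝ :=
  -r - ε * deriv π P * (1 - P) + π P

section

variable {r ε : ℝ} {π : ℝ → ℝ}

lemma AntitoneOn.deriv_nonpos_of_mem_nhds {g : ℝ → ℝ} {s : Set ℝ} {x : ℝ}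
    (hg : AntitoneOn g s) (hs : s ∈ 𝓝 x) : deriv g x ≤ 0 := by
  rw [← derivWithin_of_mem_nhds hs]
  exact hg.derivWithin_nonpos

lemma adaptiveField_pos {s : Set ℝ} {x : ℝ} (hπ : AntitoneOn π s) (hs : s ∈ 𝓝 x)
    (hε : 0 ≤ ε) (hx : x ≤ 1) (hrx : r < π x) : 0 < adaptiveField r ε π x := by
  have hterm : ε * deriv π x * (1 - x) ≤ 0 :=
    mul_nonpos_of_nonpos_of_nonneg
      (mul_nonpos_of_nonneg_of_nonpos hε (hπ.deriv_nonpos_of_mem_nhds hs)) (sub_nonneg.2 hx)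
  rw [adaptiveField]
  linarith

lemma adaptiveField_eq_neg_of_eventuallyEq_zero {x : ℝ} (hπ : π =ᶠ[𝓝 x] 0) :
    adaptiveField r ε π x = -r := by
  rw [adaptiveField, hπ.deriv_eq, hπ.eq_of_nhds]
  simp

lemma continuousOn_adaptiveField {s : Set ℝ} (hπ : ContDiffOn ℝ 1 π s) (hs : IsOpen s) :
    ContinuousOn (adaptiveField r ε π) s :=
  (continuousOn_const.sub ((continuousOn_const.mul (hπ.continuousOn_deriv_of_isOpen hs le_rfl)).mul
    (continuousOn_const.sub continuousOn_id))).add hπ.continuousOn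

end

lemma exists_mem_Ioo_lt_apply {g : ℝ → ℝ} {a b c : ℝ} (hab : a < b)
    (hg : ContinuousWithinAt g (Ioo a b) a) (hc : c < g a) : ∃ x ∈ Ioo a b, c < g x := by
  rw [ContinuousWithinAt, nhdsWithin_Ioo_eq_nhdsGT hab] at hg
  exact ((eventually_mem_set.2 (Ioo_mem_nhdsGT hab)).and (hg.eventually (lt_mem_nhds hc))).exists

theorem adaptive_dynamics_exists_equilibrium_general
    (pstar : ℝ) (hp1 : pstar < 1)
    (π : ℝ → ℝ)
    (hC1 : ContDiffOn ℝ 1 π (Icc 0 1))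
    (hmono : AntitoneOn π (Icc 0 1))
    (hπ0 : π 0 = 1)
    (hvanish : ∀ p ∈ Icc pstar 1, π p = 0)
    (r ε : ℝ) (hr : r ∈ Ioo (0:ℝ) 1) (hε : ε ∈ Icc (0:ℝ) 1)
    (f : ℝ → ℝ)
    (hf : ∀ P, f P = -r - ε * deriv π P * (1 - P) + π P) :
    ∃ P ∈ Icc (0:ℝ) 1, f P = 0 := by
  obtain rfl : f = adaptiveField r ε π := funext hf
  obtain ⟨a, ha, hra⟩ := exists_mem_Ioo_lt_apply one_pos
    ((hC1.continuousOn 0 ⟨le_rfl, zero_le_one⟩).mono Ioo_subset_Icc_self) (hπ0 ▸ hr.2)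
  have ha_lt : a < pstar := by
    by_contra! h
    linarith [hr.1, hvanish a ⟨h, ha.2.le⟩]
  obtain ⟨b, hb_gt, hb1⟩ := exists_between hp1
  have hfa : 0 < adaptiveField r ε π a :=
    adaptiveField_pos hmono (Icc_mem_nhds ha.1 ha.2) hε.1 ha.2.le hra
  have hfb : adaptiveField r ε π b < 0 := by
    have hπb : π =ᶠ[𝓝 b] 0 := eventually_of_mem (Ioo_mem_nhds hb_gt hb1)
      fun p hp => hvanish p ⟨hp.1.le, hp.2.le⟩
    rw [adaptiveField_eq_neg_of_eventuallyEq_zero hπb]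
    linarith [hr.1]
  have hcont : ContinuousOn (adaptiveField r ε π) (Icc a b) :=
    (continuousOn_adaptiveField (hC1.mono Ioo_subset_Icc_self) isOpen_Ioo).mono
      (Icc_subset_Ioo ha.1 hb1)
  obtain ⟨P, hP, hfP⟩ :=
    intermediate_value_Icc' (ha_lt.trans hb_gt).le hcont ⟨hfb.le, hfa.le⟩
  exact ⟨P, Icc_subset_Icc ha.1.le hb1.le hP, hfP⟩

/-- The adaptive dynamics `Ṗ = f(P)` with
`f(P) = -r - ε·π'(P)·(1-P) + π(P)` has at least one equilibrium in `[0,1]`. -/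
theorem adaptive_dynamics_exists_equilibrium
    (pstar : ℝ) (hp0 : 0 < pstar) (hp1 : pstar < 1)
    (π : ℝ → ℝ)
    (hC1 : ContDiffOn ℝ 1 π (Icc 0 1))
    (hmono : AntitoneOn π (Icc 0 1))
    (hπ0 : π 0 = 1)
    (hbd : ∀ p ∈ Icc (0:ℝ) 1, 0 ≤ π p ∧ π p ≤ 1)
    (hvanish : ∀ p ∈ Icc pstar 1, π p = 0)
    (r ε : ℝ) (hr : r ∈ Ioo (0:ℝ) 1) (hε : ε ∈ Icc (0:ℝ) 1)
    (f : ℝ → ℝ)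
    (hf : ∀ P, f P = -r - ε * deriv π P * (1 - P) + π P) :
    ∃ P ∈ Icc (0:ℝ) 1, f P = 0 :=
  adaptive_dynamics_exists_equilibrium_general pstar hp1 π hC1 hmono hπ0 hvanish r ε hr hε f hf
end

section
/- Let 0 < p* < 1, let π : ℝ → ℝ be twice continuously differentiable on [0,1] with π convex on [0,1], π'(p) < 0 for all p ∈ [0,p*), π(0) = 1, 0 ≤ π(p) ≤ 1 for all p ∈ [0,1], and π(p) = 0 for all p ∈ [p*,1]. Let r ∈ (0,1) and ε ∈ [0,1], and define f(P) = -r - ε·(deriv π P)·(1-P) + π(P). Then f has exactly one zero P₀ in [0,1], i.e., the adaptive dynamics Ṗ = f(P) has a unique equilibrium. -/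
open Set Filter Topology

/-! On `[p*, 1]` we have `π = 0` and `π' (1 - P) = 0`, so `f ≡ -r < 0` there. On `[0, p*]`,
convexity makes `π'` nondecreasing, hence `π' ≤ π'(p*) = 0`, so `-π'(P) (1 - P)` is a product of
two nonnegative nonincreasing functions; as `π` itself is strictly decreasing, `f` is strictly
decreasing on `[0, p*]`. Since `f 0 ≥ 1 - r > 0` and `f p* = -r < 0`, the intermediate value
theorem gives exactly one zero. -/

lemma deriv_eq_zero_of_forall_Icc_eq {f : ℝ → ℝ} {b c y : ℝ} (hbc : b < c)
    (h : ∀ x ∈ Icc b c, f x = y) : deriv f b = 0 := by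
  by_cases hd : DifferentiableAt ℝ f b
  · have hloc : f =ᶠ[𝓝[≥] b] fun _ => y := eventually_of_mem (Icc_mem_nhdsGE hbc) h
    rw [← hd.derivWithin (uniqueDiffWithinAt_Ici b),
      hloc.derivWithin_eq (h b ⟨le_rfl, hbc.le⟩), derivWithin_fun_const, Pi.zero_apply]
  · exact deriv_zero_of_not_differentiableAt hd

lemma continuousOn_deriv_Icc_of_contDiffOn {f : ℝ → ℝ} {a b c : ℝ}
    (hf : ContDiffOn ℝ 1 f (Icc a b)) (ha : DifferentiableAt ℝ f a) (hc : c < b) :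
    ContinuousOn (deriv f) (Icc a c) := by
  obtain hab | hba := lt_or_ge a b
  · refine ((hf.continuousOn_derivWithin (uniqueDiffOn_Icc hab) le_rfl).mono
      (Icc_subset_Icc_right hc.le)).congr fun x hx => ?_
    rcases hx.1.eq_or_lt with hax | hax
    · rw [← hax]
      exact (ha.derivWithin (uniqueDiffOn_Icc hab a ⟨le_rfl, hab.le⟩)).symm
    · exact (derivWithin_of_mem_nhds (Icc_mem_nhds hax (hx.2.trans_lt hc))).symm
  · rw [Icc_eq_empty (by linarith)]
    exact continuousOn_empty _

lemma strictAntiOn_sub_mul_deriv_mul_one_sub_add {π : ℝ → ℝ} {a b c ε : ℝ} (hb : b ≤ 1)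
    (hε : 0 ≤ ε) (hconv : ConvexOn ℝ (Icc a b) π) (hdiff : ∀ p ∈ Icc a b, DifferentiableAt ℝ π p)
    (hneg : ∀ p ∈ Ioo a b, deriv π p < 0) (hb' : deriv π b ≤ 0) :
    StrictAntiOn (fun P => c - ε * deriv π P * (1 - P) + π P) (Icc a b) := by
  have hmono : MonotoneOn (deriv π) (Icc a b) := hconv.monotoneOn_deriv hdiff
  have hπ : StrictAntiOn π (Icc a b) :=
    strictAntiOn_of_deriv_neg (convex_Icc a b)
      (fun p hp => (hdiff p hp).continuousAt.continuousWithinAt)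
      (by rwa [interior_Icc])
  intro x hx y hy hxy
  have hDxy : deriv π x ≤ deriv π y := hmono hx hy hxy.le
  have hDy : deriv π y ≤ 0 := (hmono hy ⟨hy.1.trans hy.2, le_rfl⟩ hy.2).trans hb'
  have hprod : deriv π x * (1 - x) ≤ deriv π y * (1 - y) :=
    calc deriv π x * (1 - x) ≤ deriv π y * (1 - x) :=
          mul_le_mul_of_nonneg_right hDxy (by linarith [hx.2])
      _ ≤ deriv π y * (1 - y) := mul_le_mul_of_nonpos_left (by linarith) hDy
  have := hπ hx hy hxy
  have := mul_le_mul_of_nonneg_left hprod hε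
  dsimp only
  linarith

lemma sub_mul_deriv_mul_one_sub_add_eq_of_forall_Icc_eq_zero {π : ℝ → ℝ} {q c ε x : ℝ}
    (hvanish : ∀ p ∈ Icc q 1, π p = 0) (hx : x ∈ Icc q 1) :
    c - ε * deriv π x * (1 - x) + π x = c := by
  -- at `x = 1` the value `deriv π 1` may be junk, but it is multiplied by `1 - 1 = 0`
  have hterm : deriv π x * (1 - x) = 0 := by
    rcases hx.2.lt_or_eq with hx1 | rfl
    · rw [deriv_eq_zero_of_forall_Icc_eq hx1 fun p hp => hvanish p ⟨hx.1.trans hp.1, hp.2⟩,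
        zero_mul]
    · rw [sub_self, mul_zero]
  rw [mul_assoc, hterm, mul_zero, sub_zero, hvanish x hx, add_zero]

lemma existsUnique_zero_of_strictAntiOn {f : ℝ → ℝ} {a b c : ℝ} (hab : a ≤ b)
    (hbc : b ≤ c) (hcont : ContinuousOn f (Icc a b)) (hanti : StrictAntiOn f (Icc a b))
    (ha : 0 ≤ f a) (hneg : ∀ x ∈ Icc b c, f x < 0) : ∃! x, x ∈ Icc a c ∧ f x = 0 := by
  obtain ⟨x, hx, hfx⟩ := intermediate_value_Icc' hab hcont ⟨(hneg b ⟨le_rfl, hbc⟩).le, ha⟩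
  refine ⟨x, ⟨⟨hx.1, hx.2.trans hbc⟩, hfx⟩, fun y ⟨hy, hfy⟩ => ?_⟩
  have hyb : y < b := lt_of_not_ge fun h => (hneg y ⟨h, hy.2⟩).ne hfy
  exact hanti.injOn ⟨hy.1, hyb.le⟩ hx (hfy.trans hfx.symm)

theorem adaptive_dynamics_unique_equilibrium_general
    (pstar : ℝ) (hp0 : 0 < pstar) (hp1 : pstar < 1)
    (π : ℝ → ℝ)
    (hC2 : ContDiffOn ℝ 2 π (Icc 0 1))
    (hconv : ConvexOn ℝ (Icc 0 1) π)
    (hπ' : ∀ p ∈ Ico (0:ℝ) pstar, deriv π p < 0)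
    (hπ0 : π 0 = 1)
    (hvanish : ∀ p ∈ Icc pstar 1, π p = 0)
    (r ε : ℝ) (hr : r ∈ Ioo (0:ℝ) 1) (hε : ε ∈ Icc (0:ℝ) 1)
    (f : ℝ → ℝ)
    (hf : ∀ P, f P = -r - ε * deriv π P * (1 - P) + π P) :
    ∃! P₀, P₀ ∈ Icc (0:ℝ) 1 ∧ f P₀ = 0 := by
  obtain rfl : f = fun P => -r - ε * deriv π P * (1 - P) + π P := funext hf
  -- at `0`, differentiability comes from `deriv π 0 ≠ 0`, as `deriv` is `0` where undefined
  have hdiff : ∀ p ∈ Icc 0 pstar, DifferentiableAt ℝ π p := fun p hp => by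
    rcases hp.1.eq_or_lt with rfl | h0
    · exact differentiableAt_of_deriv_ne_zero (hπ' 0 ⟨le_rfl, hp0⟩).ne
    · exact (hC2.differentiableOn two_ne_zero p ⟨h0.le, hp.2.trans hp1.le⟩).differentiableAt
        (Icc_mem_nhds h0 (hp.2.trans_lt hp1))
  have hflat : deriv π pstar = 0 := deriv_eq_zero_of_forall_Icc_eq hp1 hvanish
  have hD : ContinuousOn (deriv π) (Icc 0 pstar) :=
    continuousOn_deriv_Icc_of_contDiffOn (hC2.of_le one_le_two) (hdiff 0 ⟨le_rfl, hp0.le⟩) hp1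
  have hπc : ContinuousOn π (Icc 0 pstar) :=
    hC2.continuousOn.mono (Icc_subset_Icc_right hp1.le)
  refine existsUnique_zero_of_strictAntiOn hp0.le hp1.le (by fun_prop)
    (strictAntiOn_sub_mul_deriv_mul_one_sub_add hp1.le hε.1
      (hconv.subset (Icc_subset_Icc_right hp1.le) (convex_Icc _ _)) hdiff
      (fun p hp => hπ' p ⟨hp.1.le, hp.2⟩) hflat.le) ?_ fun x hx => ?_
  · have : ε * deriv π 0 ≤ 0 := mul_nonpos_of_nonneg_of_nonpos hε.1 (hπ' 0 ⟨le_rfl, hp0⟩).le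
    simp only [hπ0, sub_zero, mul_one]
    linarith [hr.2]
  · rw [sub_mul_deriv_mul_one_sub_add_eq_of_forall_Icc_eq_zero hvanish hx]
    exact neg_neg_of_pos hr.1

/-- Under convexity of `π` and strict decrease on `[0,p*)`, the adaptive
dynamics `Ṗ = f(P)` has a unique equilibrium in `[0,1]`. -/
theorem adaptive_dynamics_unique_equilibrium
    (pstar : ℝ) (hp0 : 0 < pstar) (hp1 : pstar < 1)
    (π : ℝ → ℝ)
    (hC2 : ContDiffOn ℝ 2 π (Icc 0 1))
    (hconv : ConvexOn ℝ (Icc 0 1) π)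
    (hπ' : ∀ p ∈ Ico (0:ℝ) pstar, deriv π p < 0)
    (hπ0 : π 0 = 1)
    (hbd : ∀ p ∈ Icc (0:ℝ) 1, 0 ≤ π p ∧ π p ≤ 1)
    (hvanish : ∀ p ∈ Icc pstar 1, π p = 0)
    (r ε : ℝ) (hr : r ∈ Ioo (0:ℝ) 1) (hε : ε ∈ Icc (0:ℝ) 1)
    (f : ℝ → ℝ)
    (hf : ∀ P, f P = -r - ε * deriv π P * (1 - P) + π P) :
    ∃! P₀, P₀ ∈ Icc (0:ℝ) 1 ∧ f P₀ = 0 :=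
  adaptive_dynamics_unique_equilibrium_general pstar hp0 hp1 π hC2 hconv hπ' hπ0 hvanish r ε hr hε f
    hf
end

section
/- Let 0 < p* < 1, let π : ℝ → ℝ be twice continuously differentiable on [0,1] with π convex on [0,1], π'(p) < 0 for all p ∈ [0,p*), π(0) = 1, 0 ≤ π(p) ≤ 1 for all p ∈ [0,1], and π(p) = 0 for all p ∈ [p*,1]. Let r ∈ (0,1) and ε ∈ [0,1], define f(P) = -r - ε·(deriv π P)·(1-P) + π(P), and let P₀ ∈ [0,1] be the unique zero of f. Then f'(P₀) < 0; that is, the unique equilibrium P₀ of the adaptive dynamics Ṗ = f(P) is (linearly) stable, hence a Nash equilibrium. -/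
open Set Filter Topology

/-!
At the equilibrium `f' = -ε π''(P₀)(1 - P₀) + (1 + ε) π'(P₀)`. Convexity makes the first term
nonpositive, so it suffices that `π'(P₀) < 0`, i.e. that `0 < P₀ < p*`. Beyond the threshold `π`
vanishes, and with it `π'(P)(1 - P)`, so `f = -r < 0` there; at `0` we have
`f(0) = 1 - r - ε π'(0) > 0`.
-/

lemma deriv_eq_zero_of_forall_Ico_eq {f : ℝ → ℝ} {a b c : ℝ} (hab : a < b)
    (hf : DifferentiableAt ℝ f a) (h : ∀ x ∈ Ico a b, f x = c) : deriv f a = 0 := by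
  have hconst : f =ᶠ[𝓝[≥] a] fun _ ↦ c :=
    eventually_of_mem (Ico_mem_nhdsGE hab) h
  exact (uniqueDiffWithinAt_Ici a).eq_deriv _ hf.hasDerivAt.hasDerivWithinAt
    ((hasDerivWithinAt_const a _ c).congr_of_eventuallyEq hconst (h a ⟨le_rfl, hab⟩))

lemma ConvexOn.deriv_deriv_nonneg {f : ℝ → ℝ} {s : Set ℝ} {x : ℝ} (hf : ConvexOn ℝ s f)
    (hd : ∀ y ∈ interior s, DifferentiableAt ℝ f y) (hx : x ∈ interior s) :
    0 ≤ deriv (deriv f) x := by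
  rw [← derivWithin_of_mem_nhds (isOpen_interior.mem_nhds hx)]
  exact ((hf.subset interior_subset hf.1.interior).monotoneOn_deriv hd).derivWithin_nonneg

lemma hasDerivAt_adaptive_fitness {π g : ℝ → ℝ} {g' r ε x : ℝ} (hπ : HasDerivAt π (g x) x)
    (hg : HasDerivAt g g' x) :
    HasDerivAt (fun P ↦ -r - ε * g P * (1 - P) + π P)
      (-ε * g' * (1 - x) + (1 + ε) * g x) x := by
  refine (((hasDerivAt_const x (-r)).fun_sub
    ((hg.const_mul ε).fun_mul ((hasDerivAt_id' x).const_sub 1))).fun_add hπ).congr_deriv ?_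
  ring

lemma deriv_mul_one_sub_eq_zero_of_vanishing {π : ℝ → ℝ} {pstar P : ℝ}
    (hd : ∀ x ∈ Ico pstar 1, DifferentiableAt ℝ π x) (hvanish : ∀ p ∈ Icc pstar 1, π p = 0)
    (hP : P ∈ Icc pstar 1) : deriv π P * (1 - P) = 0 := by
  rcases hP.2.eq_or_lt with rfl | hP1
  · ring
  · rw [deriv_eq_zero_of_forall_Ico_eq hP1 (hd P ⟨hP.1, hP1⟩)
      fun x hx ↦ hvanish x ⟨hP.1.trans hx.1, hx.2.le⟩, zero_mul]

theorem adaptive_dynamics_unique_equilibrium_stable_general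
    (pstar : ℝ) (hp0 : 0 < pstar) (hp1 : pstar < 1)
    (π : ℝ → ℝ)
    (hC2 : ContDiffOn ℝ 2 π (Icc 0 1))
    (hconv : ConvexOn ℝ (Icc 0 1) π)
    (hπ' : ∀ p ∈ Ico (0:ℝ) pstar, deriv π p < 0)
    (hπ0 : π 0 = 1)
    (hvanish : ∀ p ∈ Icc pstar 1, π p = 0)
    (r ε : ℝ) (hr : r ∈ Ioo (0:ℝ) 1) (hε : ε ∈ Icc (0:ℝ) 1)
    (f : ℝ → ℝ)
    (hf : ∀ P, f P = -r - ε * deriv π P * (1 - P) + π P)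
    (P₀ : ℝ) (hP₀ : P₀ ∈ Icc (0:ℝ) 1) (hfP₀ : f P₀ = 0) :
    deriv f P₀ < 0 := by
  have hC2' : ContDiffOn ℝ 2 π (Ioo 0 1) := hC2.mono Ioo_subset_Icc_self
  have hπd : ∀ x ∈ Ioo 0 1, DifferentiableAt ℝ π x :=
    fun x hx ↦ (hC2'.differentiableOn two_ne_zero).differentiableAt (isOpen_Ioo.mem_nhds hx)
  have hlt : P₀ < pstar := by
    by_contra! hge
    have hP₀' : P₀ ∈ Icc pstar 1 := ⟨hge, hP₀.2⟩
    rw [hf, mul_assoc, hvanish P₀ hP₀', deriv_mul_one_sub_eq_zero_of_vanishing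
      (fun x hx ↦ hπd x ⟨hp0.trans_le hx.1, hx.2⟩) hvanish hP₀'] at hfP₀
    linarith [hr.1]
  have hpos : 0 < P₀ := by
    refine hP₀.1.lt_of_ne ?_
    rintro rfl
    rw [hf, hπ0] at hfP₀
    nlinarith [hπ' 0 ⟨le_rfl, hp0⟩, hε.1, hr.2]
  have hmem : P₀ ∈ Ioo 0 1 := ⟨hpos, hlt.trans hp1⟩
  have hπ'd : DifferentiableAt ℝ (deriv π) P₀ :=
    ((hC2'.deriv_of_isOpen isOpen_Ioo (m := 1) (by norm_num)).differentiableOn one_ne_zero)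
      |>.differentiableAt (isOpen_Ioo.mem_nhds hmem)
  have hπ'' : 0 ≤ deriv (deriv π) P₀ :=
    hconv.deriv_deriv_nonneg (by rwa [interior_Icc]) (by rwa [interior_Icc])
  rw [funext hf, (hasDerivAt_adaptive_fitness (hπd P₀ hmem).hasDerivAt hπ'd.hasDerivAt).deriv]
  nlinarith [hπ' P₀ ⟨hP₀.1, hlt⟩, hε.1, mul_nonneg hπ'' (sub_nonneg.2 hP₀.2)]

/-- Under convexity of `π` and strict decrease on `[0,p*)`, the unique
equilibrium `P₀` of the adaptive dynamics satisfies `f'(P₀) < 0`,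
i.e. it is linearly stable (a Nash equilibrium). -/
theorem adaptive_dynamics_unique_equilibrium_stable
    (pstar : ℝ) (hp0 : 0 < pstar) (hp1 : pstar < 1)
    (π : ℝ → ℝ)
    (hC2 : ContDiffOn ℝ 2 π (Icc 0 1))
    (hconv : ConvexOn ℝ (Icc 0 1) π)
    (hπ' : ∀ p ∈ Ico (0:ℝ) pstar, deriv π p < 0)
    (hπ0 : π 0 = 1)
    (hbd : ∀ p ∈ Icc (0:ℝ) 1, 0 ≤ π p ∧ π p ≤ 1)
    (hvanish : ∀ p ∈ Icc pstar 1, π p = 0)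
    (r ε : ℝ) (hr : r ∈ Ioo (0:ℝ) 1) (hε : ε ∈ Icc (0:ℝ) 1)
    (f : ℝ → ℝ)
    (hf : ∀ P, f P = -r - ε * deriv π P * (1 - P) + π P)
    (P₀ : ℝ) (hP₀ : P₀ ∈ Icc (0:ℝ) 1) (hfP₀ : f P₀ = 0)
    (huniq : ∀ P ∈ Icc (0:ℝ) 1, f P = 0 → P = P₀) :
    deriv f P₀ < 0 :=
  adaptive_dynamics_unique_equilibrium_stable_general pstar hp0 hp1 π hC2 hconv hπ' hπ0 hvanish r ε
    hr hε f hf P₀ hP₀ hfP₀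
end

section
/- Let 0 < p* < 1, let π : ℝ → ℝ be continuously differentiable on [0,1] with π monotonically decreasing on [0,1], π'(p) < 0 for all p ∈ [0,p*), π(0) = 1, 0 ≤ π(p) ≤ 1 for all p ∈ [0,1], and π(p) = 0 for all p ∈ [p*,1]. Let r ∈ (0,1) and ε ∈ (0,1], and define f(P) = -r - ε·(deriv π P)·(1-P) + π(P). Then every P ∈ [0,1] with f(P) = 0 satisfies π(P) < r; in particular, every equilibrium P is strictly greater than any point Q ∈ [0,1] with π(Q) = r. -/
open Set

/-! At an equilibrium, `π P = r + ε π'(P) (1 - P)`. Below the threshold `p*` the correction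
term is negative, so `π P < r`; from `p*` on, `π P = 0 < r`. Since `π` is antitone, `π P < π Q`
then forces `Q < P`. -/

theorem value_lt_of_equilibrium {π : ℝ → ℝ} {pstar r ε P : ℝ} (hp1 : pstar ≤ 1)
    (hπ' : ∀ p ∈ Ico (0:ℝ) pstar, deriv π p < 0) (hvanish : ∀ p ∈ Icc pstar 1, π p = 0)
    (hr : 0 < r) (hε : 0 < ε) (hP : P ∈ Icc (0:ℝ) 1)
    (hequil : -r - ε * deriv π P * (1 - P) + π P = 0) : π P < r := by
  rcases lt_or_ge P pstar with hlt | hge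
  · have hcorr : ε * deriv π P * (1 - P) < 0 :=
      mul_neg_of_neg_of_pos (mul_neg_of_pos_of_neg hε (hπ' P ⟨hP.1, hlt⟩)) (by linarith)
    linarith
  · rw [hvanish P ⟨hge, hP.2⟩]
    exact hr

theorem adaptive_dynamics_equilibrium_lower_bound_general
    (pstar : ℝ) (hp1 : pstar < 1)
    (π : ℝ → ℝ)
    (hmono : AntitoneOn π (Icc 0 1))
    (hπ' : ∀ p ∈ Ico (0:ℝ) pstar, deriv π p < 0)
    (hvanish : ∀ p ∈ Icc pstar 1, π p = 0)
    (r ε : ℝ) (hr : r ∈ Ioo (0:ℝ) 1) (hε : ε ∈ Ioc (0:ℝ) 1)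
    (f : ℝ → ℝ)
    (hf : ∀ P, f P = -r - ε * deriv π P * (1 - P) + π P) :
    ∀ P ∈ Icc (0:ℝ) 1, f P = 0 →
      π P < r ∧ ∀ Q ∈ Icc (0:ℝ) 1, π Q = r → Q < P := by
  intro P hP hfP
  have hlt : π P < r := value_lt_of_equilibrium hp1.le hπ' hvanish hr.1 hε.1 hP (hf P ▸ hfP)
  exact ⟨hlt, fun Q hQ hQr => hmono.reflect_lt hP hQ (hQr ▸ hlt)⟩

/-- Every equilibrium `P` of the adaptive dynamics satisfies `π(P) < r`;
in particular it is strictly greater than any point `Q ∈ [0,1]` with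
`π(Q) = r`. -/
theorem adaptive_dynamics_equilibrium_lower_bound
    (pstar : ℝ) (hp0 : 0 < pstar) (hp1 : pstar < 1)
    (π : ℝ → ℝ)
    (hC1 : ContDiffOn ℝ 1 π (Icc 0 1))
    (hmono : AntitoneOn π (Icc 0 1))
    (hπ' : ∀ p ∈ Ico (0:ℝ) pstar, deriv π p < 0)
    (hπ0 : π 0 = 1)
    (hbd : ∀ p ∈ Icc (0:ℝ) 1, 0 ≤ π p ∧ π p ≤ 1)
    (hvanish : ∀ p ∈ Icc pstar 1, π p = 0)
    (r ε : ℝ) (hr : r ∈ Ioo (0:ℝ) 1) (hε : ε ∈ Ioc (0:ℝ) 1)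
    (f : ℝ → ℝ)
    (hf : ∀ P, f P = -r - ε * deriv π P * (1 - P) + π P) :
    ∀ P ∈ Icc (0:ℝ) 1, f P = 0 →
      π P < r ∧ ∀ Q ∈ Icc (0:ℝ) 1, π Q = r → Q < P :=
  adaptive_dynamics_equilibrium_lower_bound_general pstar hp1 π hmono hπ' hvanish r ε hr hε f hf
end

section
/- Let 0 < p* < 1, let π : ℝ → ℝ be twice continuously differentiable on [0,1] with π monotonically decreasing on [0,1], π(0) = 1, 0 ≤ π(p) ≤ 1 for all p ∈ [0,1], and π(p) = 0 for all p ∈ [p*,1]. Let r ∈ (0,1) and ε ∈ [0,1], and define f(P) = -r - ε·(deriv π P)·(1-P) + π(P). Assume every zero of f in [0,1] is nondegenerate, i.e., f(P) = 0 implies f'(P) ≠ 0 for P ∈ [0,1]. Then the set of zeros of f in [0,1] is finite and has odd cardinality. -/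
open Set Filter Topology

/-!
A nondegenerate zero of a function is isolated and is a strict sign change, so a continuous
function all of whose zeros on a compact interval are nondegenerate has finitely many of them,
and its sign flips exactly once at each. Hence if it is positive at the left end and negative at
the right end, it has an odd number of zeros. For the adaptive dynamics, `f 0 = 1 - r - ε π'(0)`
is positive because `π` is decreasing, and `f 1 = -r < 0`. As `deriv π` is junk at the
endpoints of `[0,1]`, the count is carried out for the function obtained by replacing `deriv π`
with `derivWithin π (Icc 0 1)`: it agrees with `f` on `(0,1)` and is continuous on `[0,1]`.
-/

section SignAlgebra

variable {α : Type*} [CommRing α] [LinearOrder α] [IsStrictOrderedRing α] {x y w : α}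

lemma mul_neg_of_mul_pos_of_mul_neg (hxy : 0 < x * y) (hyw : y * w < 0) : x * w < 0 := by
  have key : (x * y) * (y * w) = (x * w) * (y * y) := by ring
  exact neg_of_mul_neg_left (key ▸ mul_neg_of_pos_of_neg hxy hyw) (mul_self_nonneg y)

lemma mul_neg_iff_not_mul_neg_of_mul_neg (hxy : x * y < 0) (hw : w ≠ 0) :
    x * w < 0 ↔ ¬ y * w < 0 := by
  have key : (x * w) * (y * w) = (x * y) * (w * w) := by ring
  have hneg : (x * w) * (y * w) < 0 := key ▸ mul_neg_of_neg_of_pos hxy (mul_self_pos.2 hw)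
  constructor
  · intro hxw hyw
    exact (mul_pos_of_neg_of_neg hxw hyw).not_gt hneg
  · intro hyw
    exact neg_of_mul_neg_left hneg (not_lt.1 hyw)

end SignAlgebra

section ZerosOfNondegenerate

variable {F : ℝ → ℝ} {a b : ℝ}

lemma mul_pos_of_continuousOn_of_ne_zero (hab : a ≤ b) (hF : ContinuousOn F (Icc a b))
    (h : ∀ x ∈ Icc a b, F x ≠ 0) : 0 < F a * F b := by
  by_contra! hle
  obtain ⟨z, hz, hFz⟩ : ∃ z ∈ Icc a b, F z = 0 := by
    rcases mul_nonpos_iff.1 hle with ⟨ha, hb⟩ | ⟨ha, hb⟩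
    · exact intermediate_value_Icc' hab hF ⟨hb, ha⟩
    · exact intermediate_value_Icc hab hF ⟨ha, hb⟩
  exact h z hz hFz

lemma exists_mul_neg_of_deriv_ne_zero {z : ℝ} (hz : F z = 0) (hd : deriv F z ≠ 0) :
    ∃ δ > 0, ∀ x ∈ Ioo (z - δ) z, ∀ y ∈ Ioo z (z + δ), F x * F y < 0 := by
  set d := deriv F z
  have hslope : Tendsto (fun x => d * slope F z x) (𝓝[≠] z) (𝓝 (d * d)) :=
    (hasDerivAt_iff_tendsto_slope.1 (differentiableAt_of_deriv_ne_zero hd).hasDerivAt).const_mul d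
  obtain ⟨δ, hδ, hball⟩ := Metric.mem_nhdsWithin_iff.1
    (hslope.eventually (eventually_gt_nhds (mul_self_pos.2 hd)))
  have hsign : ∀ x, |x - z| < δ → x ≠ z → 0 < d * F x * (x - z) := by
    intro x hx hxz
    have h := hball ⟨by rwa [Metric.mem_ball, Real.dist_eq], hxz⟩
    simp only [mem_ofPred_eq, slope_def_field, hz, sub_zero] at h
    have hxz' : (x - z) ≠ 0 := sub_ne_zero.2 hxz
    have hsq : d * F x * (x - z) = d * (F x / (x - z)) * (x - z) ^ 2 := by field_simp
    rw [hsq]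
    positivity
  refine ⟨δ, hδ, fun x hx y hy => ?_⟩
  have hx' := hsign x (by rw [abs_lt]; constructor <;> linarith [hx.1, hx.2]) hx.2.ne
  have hy' := hsign y (by rw [abs_lt]; constructor <;> linarith [hy.1, hy.2]) hy.1.ne'
  have hdx : d * F x < 0 := neg_of_mul_pos_left hx' (by linarith [hx.2])
  have hdy : 0 < d * F y := pos_of_mul_pos_left hy' (by linarith [hy.1])
  have key : (d * F x) * (d * F y) = (F x * F y) * (d * d) := by ring
  exact neg_of_mul_neg_left (key ▸ mul_neg_of_neg_of_pos hdx hdy) (mul_self_nonneg d)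

lemma finite_zeros_of_deriv_ne_zero (hF : ContinuousOn F (Icc a b))
    (hnd : ∀ z ∈ Icc a b, F z = 0 → deriv F z ≠ 0) : {x | x ∈ Icc a b ∧ F x = 0}.Finite := by
  refine IsCompact.finite ?_ ?_
  · exact isCompact_Icc.of_isClosed_subset
      (hF.preimage_isClosed_of_isClosed isClosed_Icc isClosed_singleton) fun x hx => hx.1
  · rw [isDiscrete_iff_nhdsNE]
    rintro z ⟨hz, hFz⟩
    have hd := hnd z hz hFz
    rw [inf_principal_eq_bot]
    filter_upwards [(differentiableAt_of_deriv_ne_zero hd).hasDerivAt.eventually_ne hd (c := 0)]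
      with x hx hxZ using hx hxZ.2

theorem mul_neg_iff_odd_ncard_zeros (hab : a ≤ b) (hF : ContinuousOn F (Icc a b))
    (hnd : ∀ z ∈ Icc a b, F z = 0 → deriv F z ≠ 0) (ha : F a ≠ 0) (hb : F b ≠ 0) :
    F a * F b < 0 ↔ Odd {x | x ∈ Icc a b ∧ F x = 0}.ncard := by
  have hfin := finite_zeros_of_deriv_ne_zero hF hnd
  induction hn : {x | x ∈ Icc a b ∧ F x = 0}.ncard generalizing a with
  | zero =>
    have hne : ∀ x ∈ Icc a b, F x ≠ 0 := fun x hx hFx =>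
      eq_empty_iff_forall_notMem.1 ((ncard_eq_zero hfin).1 hn) x ⟨hx, hFx⟩
    simpa using (mul_pos_of_continuousOn_of_ne_zero hab hF hne).le
  | succ n ih =>
    -- Split off the smallest zero `z`: `F` keeps the sign of `F a` up to `z` and flips it at `z`.
    set Z := {x | x ∈ Icc a b ∧ F x = 0}
    obtain ⟨z, hzZ, hmin⟩ := exists_min_image Z id hfin (nonempty_of_ncard_ne_zero (by omega))
    obtain ⟨hz, hFz⟩ := hzZ
    have haz : a < z := hz.1.lt_of_ne (by rintro rfl; exact ha hFz)
    have hzb : z < b := hz.2.lt_of_ne (by rintro rfl; exact hb hFz)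
    obtain ⟨δ, hδ, hsign⟩ := exists_mul_neg_of_deriv_ne_zero hFz (hnd z hz hFz)
    set x := max a (z - δ / 2)
    set c := min b (z + δ / 2)
    have hx : x ∈ Ioo (z - δ) z := ⟨lt_max_of_lt_right (by linarith), max_lt haz (by linarith)⟩
    have hc : c ∈ Ioo z (z + δ) := ⟨lt_min hzb (by linarith), min_lt_of_right_lt (by linarith)⟩
    have hxb : x ≤ b := hx.2.le.trans hz.2
    have hax : 0 < F a * F x :=
      mul_pos_of_continuousOn_of_ne_zero (le_max_left _ _) (hF.mono (Icc_subset_Icc_right hxb))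
        fun y hy hFy => (hmin y ⟨⟨hy.1, hy.2.trans hxb⟩, hFy⟩).not_gt (hy.2.trans_lt hx.2)
    have hZc : {y | y ∈ Icc c b ∧ F y = 0} = Z \ {z} := by
      ext y
      constructor
      · rintro ⟨⟨hcy, hyb⟩, hFy⟩
        exact ⟨⟨⟨(haz.trans (hc.1.trans_le hcy)).le, hyb⟩, hFy⟩, (hc.1.trans_le hcy).ne'⟩
      · rintro ⟨⟨hy, hFy⟩, hyz : y ≠ z⟩
        have hzy : z < y := (hmin y ⟨hy, hFy⟩).lt_of_ne' hyz
        refine ⟨⟨not_lt.1 fun hyc => ?_, hy.2⟩, hFy⟩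
        simpa [hFy] using hsign x hx y ⟨hzy, hyc.trans hc.2⟩
    have hcb : c ≤ b := min_le_left _ _
    have hFc : F c ≠ 0 := fun h => by simpa [h] using hsign x hx c hc
    rw [Nat.odd_add_one, mul_neg_iff_not_mul_neg_of_mul_neg
      (mul_neg_of_mul_pos_of_mul_neg hax (hsign x hx c hc)) hb]
    refine not_congr (ih hcb (hF.mono (Icc_subset_Icc_left (haz.trans hc.1).le))
      (fun y hy => hnd y ⟨(haz.trans (hc.1.trans_le hy.1)).le, hy.2⟩) hFc ?_ ?_)
    · exact hZc ▸ hfin.sdiff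
    · rw [hZc, ncard_sdiff_singleton_of_mem (show z ∈ Z from ⟨hz, hFz⟩), hn, Nat.add_sub_cancel]

theorem finite_zeros_and_odd_ncard_of_eqOn_Ioo {G : ℝ → ℝ} (hab : a ≤ b)
    (hG : ContinuousOn G (Icc a b)) (hFG : EqOn F G (Ioo a b))
    (hFa : F a ≠ 0) (hFb : F b ≠ 0) (hGa : 0 < G a) (hGb : G b < 0)
    (hnd : ∀ z ∈ Icc a b, F z = 0 → deriv F z ≠ 0) :
    {x | x ∈ Icc a b ∧ F x = 0}.Finite ∧ Odd {x | x ∈ Icc a b ∧ F x = 0}.ncard := by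
  have mem_Ioo_of_zero {H : ℝ → ℝ} (ha : H a ≠ 0) (hb : H b ≠ 0) {x : ℝ} (hx : x ∈ Icc a b)
      (hHx : H x = 0) : x ∈ Ioo a b :=
    ⟨hx.1.lt_of_ne (by rintro rfl; exact ha hHx), hx.2.lt_of_ne (by rintro rfl; exact hb hHx)⟩
  have hzeros : {x | x ∈ Icc a b ∧ F x = 0} = {x | x ∈ Icc a b ∧ G x = 0} := by
    ext x
    constructor
    · rintro ⟨hx, hFx⟩
      exact ⟨hx, hFG (mem_Ioo_of_zero hFa hFb hx hFx) ▸ hFx⟩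
    · rintro ⟨hx, hGx⟩
      exact ⟨hx, (hFG (mem_Ioo_of_zero hGa.ne' hGb.ne hx hGx)).symm ▸ hGx⟩
  have hGnd : ∀ z ∈ Icc a b, G z = 0 → deriv G z ≠ 0 := by
    intro z hz hGz
    have hz' := mem_Ioo_of_zero hGa.ne' hGb.ne hz hGz
    rw [← (hFG.eventuallyEq_of_mem (Ioo_mem_nhds hz'.1 hz'.2)).deriv_eq]
    exact hnd z hz ((hFG hz').symm ▸ hGz)
  rw [hzeros]
  exact ⟨finite_zeros_of_deriv_ne_zero hG hGnd,
    (mul_neg_iff_odd_ncard_zeros hab hG hGnd hGa.ne' hGb.ne).1 (mul_neg_of_pos_of_neg hGa hGb)⟩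

end ZerosOfNondegenerate

lemma deriv_nonpos_of_antitoneOn_Icc {g : ℝ → ℝ} {a b x : ℝ} (hab : a < b) (hx : x ∈ Icc a b)
    (hg : AntitoneOn g (Icc a b)) : deriv g x ≤ 0 := by
  by_cases hd : DifferentiableAt ℝ g x
  · rw [← hd.derivWithin (uniqueDiffOn_Icc hab x hx)]
    exact hg.derivWithin_nonpos
  · rw [deriv_zero_of_not_differentiableAt hd]

theorem adaptive_dynamics_odd_number_of_equilibria_general
    (pstar : ℝ) (hp1 : pstar < 1)
    (π : ℝ → ℝ)
    (hC2 : ContDiffOn ℝ 2 π (Icc 0 1))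
    (hmono : AntitoneOn π (Icc 0 1))
    (hπ0 : π 0 = 1)
    (hvanish : ∀ p ∈ Icc pstar 1, π p = 0)
    (r ε : ℝ) (hr : r ∈ Ioo (0:ℝ) 1) (hε : ε ∈ Icc (0:ℝ) 1)
    (f : ℝ → ℝ)
    (hf : ∀ P, f P = -r - ε * deriv π P * (1 - P) + π P)
    (hnondeg : ∀ P ∈ Icc (0:ℝ) 1, f P = 0 → deriv f P ≠ 0) :
    {P : ℝ | P ∈ Icc (0:ℝ) 1 ∧ f P = 0}.Finite ∧
    Odd {P : ℝ | P ∈ Icc (0:ℝ) 1 ∧ f P = 0}.ncard := by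
  set g : ℝ → ℝ := fun P => -r - ε * derivWithin π (Icc 0 1) P * (1 - P) + π P
  have hg : ContinuousOn g (Icc 0 1) := by
    have hπ' := hC2.continuousOn_derivWithin (uniqueDiffOn_Icc one_pos) one_le_two
    have hπ := hC2.continuousOn
    fun_prop
  have hfg : EqOn f g (Ioo 0 1) := fun P hP => by
    simp only [hf, g, derivWithin_of_mem_nhds (Icc_mem_nhds hP.1 hP.2)]
  have hπ1 : π 1 = 0 := hvanish 1 ⟨hp1.le, le_rfl⟩
  have hf0 : 0 < f 0 := by
    rw [hf, hπ0]
    have hπ'0 := deriv_nonpos_of_antitoneOn_Icc one_pos (left_mem_Icc.2 zero_le_one) hmono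
    nlinarith [hε.1, hr.2]
  have hg0 : 0 < g 0 := by
    simp only [g, hπ0]
    nlinarith [hmono.derivWithin_nonpos (x := 0), hε.1, hr.2]
  have hf1 : f 1 < 0 := by
    rw [hf, hπ1, sub_self, mul_zero]
    linarith [hr.1]
  have hg1 : g 1 < 0 := by
    simp only [g, hπ1, sub_self, mul_zero]
    linarith [hr.1]
  exact finite_zeros_and_odd_ncard_of_eqOn_Ioo zero_le_one hg hfg hf0.ne' hf1.ne hg0 hg1 hnondeg

/-- If all equilibria of the adaptive dynamics are nondegenerate, then the
set of equilibria in `[0,1]` is finite and has odd cardinality. -/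
theorem adaptive_dynamics_odd_number_of_equilibria
    (pstar : ℝ) (hp0 : 0 < pstar) (hp1 : pstar < 1)
    (π : ℝ → ℝ)
    (hC2 : ContDiffOn ℝ 2 π (Icc 0 1))
    (hmono : AntitoneOn π (Icc 0 1))
    (hπ0 : π 0 = 1)
    (hbd : ∀ p ∈ Icc (0:ℝ) 1, 0 ≤ π p ∧ π p ≤ 1)
    (hvanish : ∀ p ∈ Icc pstar 1, π p = 0)
    (r ε : ℝ) (hr : r ∈ Ioo (0:ℝ) 1) (hε : ε ∈ Icc (0:ℝ) 1)
    (f : ℝ → ℝ)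
    (hf : ∀ P, f P = -r - ε * deriv π P * (1 - P) + π P)
    (hnondeg : ∀ P ∈ Icc (0:ℝ) 1, f P = 0 → deriv f P ≠ 0) :
    {P : ℝ | P ∈ Icc (0:ℝ) 1 ∧ f P = 0}.Finite ∧
    Odd {P : ℝ | P ∈ Icc (0:ℝ) 1 ∧ f P = 0}.ncard :=
  adaptive_dynamics_odd_number_of_equilibria_general pstar hp1 π hC2 hmono hπ0 hvanish r ε hr hε f
    hf hnondeg
end
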